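/- If (X, m) is a cancellative midpoint set, then there is at most one superconvex structure on X satisfying ½·x + ½·y = m(x,y) for all x, y ∈ X: any two superconvex structures Σ' and Σ'' on X whose binary ½-½ combinations both equal m must agree on every superconvex combination. -/

import Mathlib

/-- A midpoint operation: idempotent, commutative, satisfying transposition. -/
def IsMidpoint {A : Type} (m : A → A → A) : Prop :=
  (∀ x, m x x = x) ∧ (∀ x y, m x y = m y x) ∧
    (∀ x y z w, m (m x y) (m z w) = m (m x z) (m y w))

/-- Cancellation: `m x y = m x z` implies `y = z`. -/
def Cancellative {A : Type} (m : A → A → A) : Prop :=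
  ∀ x y z, m x y = m x z → y = z

/-- Iterativity in the category of sets. -/
def Iterative {A : Type} (m : A → A → A) : Prop :=
  ∀ (X : Type) (c : X → A × X), ∃! u : X → A, ∀ x, u x = m (c x).1 (u (c x).2)

/-- The unfolding property of an infinitary operation `M` with respect to `m`. -/
def Unfolding {A : Type} (m : A → A → A) (M : (ℕ → A) → A) : Prop :=
  ∀ x : ℕ → A, M x = m (x 0) (M fun i => x (i + 1))

/-- The canonicity property of an infinitary operation `M` with respect to `m`. -/
def Canonicity {A : Type} (m : A → A → A) (M : (ℕ → A) → A) : Prop :=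
  ∀ x y : ℕ → A, (∀ i, y i = m (x i) (y (i + 1))) → y 0 = M x

/-- A superconvex weight: a nonnegative sequence summing to 1. -/
def IsWeight (lam : ℕ → ℝ) : Prop := (∀ i, 0 ≤ lam i) ∧ ∑' i, lam i = 1

/-- A superconvex structure on `X`: an operation of countable convex combination,
satisfying the projection and composition laws (on genuine weights). -/
structure SuperconvexStr (X : Type) where
  comb : (ℕ → ℝ) → (ℕ → X) → X
  proj : ∀ lam, IsWeight lam → ∀ k, lam k = 1 → (∀ i, i ≠ k → lam i = 0) →
    ∀ x, comb lam x = x k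
  compos : ∀ lam, IsWeight lam → ∀ mu : ℕ → ℕ → ℝ, (∀ i, IsWeight (mu i)) →
    ∀ x : ℕ → X, comb lam (fun i => comb (mu i) x) = comb (fun j => ∑' i, lam i * mu i j) x

/-- The binary combination `λ·x + (1-λ)·y`. -/
def SuperconvexStr.pair {X : Type} (S : SuperconvexStr X) (lam : ℝ) (x y : X) : X :=
  S.comb (fun i => if i = 0 then lam else if i = 1 then 1 - lam else 0)
    (fun i => if i = 0 then x else y)

/-- Cancellativity of a superconvex structure. -/
def SuperconvexStr.Cancellative {X : Type} (S : SuperconvexStr X) : Prop :=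
  ∀ lam : ℝ, 0 < lam → lam < 1 → ∀ x y z : X, S.pair lam x z = S.pair lam y z → x = y

/-- Iterativity of a superconvex structure. -/
def SuperconvexStr.Iterative {X : Type} (S : SuperconvexStr X) : Prop :=
  ∀ (x y : ℕ → X) (lam mu : ℕ → ℝ),
    (∀ i, 0 < lam i ∧ lam i < 1) → (∀ i, 0 < mu i ∧ mu i < 1) →
    (∀ i, lam i + mu i = 1) →
    (∀ i, x i = S.pair (lam i) (y i) (x (i + 1))) →
    Filter.Tendsto (fun n => ∏ j ∈ Finset.range n, mu j) Filter.atTop (nhds 0) →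
    x 0 = S.comb (fun i => lam i * ∏ j ∈ Finset.range i, mu j) y

/-!
A superconvex structure extending `m` is pinned down on geometric combinations
`Σ 2⁻⁽ⁿ⁺¹⁾ zₙ`: if `y n = m (z n) (y (n + 1))` for all `n`, then unfolding `Σ 2⁻⁽ⁿ⁺¹⁾ yₙ` once
gives `m (y 0) w`, while substituting the recursion under the sum (the entropic law) gives
`m (Σ 2⁻⁽ⁿ⁺¹⁾ zₙ) w`; cancelling, `y 0 = Σ 2⁻⁽ⁿ⁺¹⁾ zₙ`. A binary combination `t x + (1 - t) y`
is such a `y 0`, guarded by the binary digits of `t`; finitely supported combinations follow by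
splitting off one point at a time; and every weight is a geometric mixture of finitely supported
weights, obtained by cutting `[0, 1)` into the dyadic blocks `[1 - 2⁻ᵏ, 1 - 2⁻⁽ᵏ⁺¹⁾)`.
-/

open Filter Finset Function

theorem IsWeight.hasSum {lam : ℕ → ℝ} (h : IsWeight lam) : HasSum lam 1 := by
  have hs : Summable lam := by
    by_contra hs
    simpa [tsum_eq_zero_of_not_summable hs] using h.2
  simpa [h.2] using hs.hasSum

theorem isWeight_of_hasSum {lam : ℕ → ℝ} (h0 : ∀ i, 0 ≤ lam i) (h1 : HasSum lam 1) :
    IsWeight lam :=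
  ⟨h0, h1.tsum_eq⟩

theorem IsWeight.le_one {lam : ℕ → ℝ} (h : IsWeight lam) (k : ℕ) : lam k ≤ 1 :=
  le_hasSum h.hasSum k fun j _ => h.1 j

theorem IsWeight.eq_zero_of_eq_one {lam : ℕ → ℝ} (h : IsWeight lam) {k : ℕ} (hk : lam k = 1)
    {i : ℕ} (hi : i ≠ k) : lam i = 0 := by
  have := sum_le_hasSum {i, k} (fun j _ => h.1 j) h.hasSum
  rw [sum_pair hi, hk] at this
  linarith [h.1 i]

theorem isWeight_single (k : ℕ) : IsWeight (Pi.single k 1) :=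
  ⟨fun i => by rw [Pi.single_apply]; split_ifs <;> norm_num, tsum_pi_single k 1⟩

theorem isWeight_extend {lam : ℕ → ℝ} (h : IsWeight lam) {f : ℕ → ℕ} (hf : Injective f) :
    IsWeight (extend f lam 0) := by
  have hzero : ∀ k ∉ Set.range f, extend f lam 0 k = 0 := fun k hk =>
    extend_apply' _ _ _ hk
  refine isWeight_of_hasSum (fun k => ?_) ?_
  · by_cases hk : k ∈ Set.range f
    · obtain ⟨i, rfl⟩ := hk
      rw [hf.extend_apply]
      exact h.1 i
    · rw [hzero k hk]
  · rw [← hf.hasSum_iff hzero, extend_comp hf]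
    exact h.hasSum

theorem isWeight_mix {α β : ℕ → ℝ} (hα : IsWeight α) (hβ : IsWeight β) {t : ℝ} (h0 : 0 ≤ t)
    (h1 : t ≤ 1) : IsWeight (fun j => t * α j + (1 - t) * β j) := by
  refine isWeight_of_hasSum (fun j => ?_) ?_
  · have := hα.1 j; have := hβ.1 j; nlinarith
  · simpa using (hα.hasSum.mul_left t).add (hβ.hasSum.mul_left (1 - t))

def pairWeight (t : ℝ) : ℕ → ℝ := fun i => if i = 0 then t else if i = 1 then 1 - t else 0

theorem pairWeight_eq_zero (t : ℝ) {i : ℕ} (hi : i ∉ ({0, 1} : Finset ℕ)) :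
    pairWeight t i = 0 := by
  simp only [mem_insert, mem_singleton, not_or] at hi
  simp [pairWeight, hi.1, hi.2]

theorem isWeight_pairWeight {t : ℝ} (h0 : 0 ≤ t) (h1 : t ≤ 1) : IsWeight (pairWeight t) := by
  refine isWeight_of_hasSum (fun i => ?_) ?_
  · unfold pairWeight; split_ifs <;> linarith
  · simpa [pairWeight] using hasSum_sum_of_ne_finset_zero fun i => pairWeight_eq_zero t

-- Junk (a division by zero) when `lam 0 = 1`.
noncomputable def tailWeight (lam : ℕ → ℝ) : ℕ → ℝ := fun j => lam (j + 1) / (1 - lam 0)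

theorem isWeight_tailWeight {lam : ℕ → ℝ} (h : IsWeight lam) (h0 : lam 0 < 1) :
    IsWeight (tailWeight lam) := by
  have hpos : 0 < 1 - lam 0 := by linarith
  refine isWeight_of_hasSum (fun j => div_nonneg (h.1 _) hpos.le) ?_
  have htail : HasSum (fun j => lam (j + 1)) (1 - lam 0) := by
    simpa using (hasSum_nat_add_iff' 1).2 h.hasSum
  have h := htail.div_const (1 - lam 0)
  rwa [div_self hpos.ne'] at h

noncomputable def geomWeight (n : ℕ) : ℝ := (1 / 2) ^ (n + 1)

theorem geomWeight_pos (n : ℕ) : 0 < geomWeight n := by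
  unfold geomWeight; positivity

theorem isWeight_geomWeight : IsWeight geomWeight := by
  refine isWeight_of_hasSum (fun n => (geomWeight_pos n).le) ?_
  have h := hasSum_geometric_two.mul_left (1 / 2)
  rw [show (1 : ℝ) / 2 * 2 = 1 by norm_num] at h
  simp only [← pow_succ'] at h
  exact h

theorem tailWeight_geomWeight : tailWeight geomWeight = geomWeight := by
  ext j; simp only [tailWeight, geomWeight]; ring

section Overlap

/-- For monotone `F` and `G`, the length of `[F j, F (j + 1)) ∩ [G k, G (k + 1))`. -/
def overlap (F G : ℕ → ℝ) (j k : ℕ) : ℝ :=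
  (min (F (j + 1)) (G (k + 1)) - min (F (j + 1)) (G k)) -
    (min (F j) (G (k + 1)) - min (F j) (G k))

variable {F G : ℕ → ℝ}

theorem overlap_comm (j k : ℕ) : overlap F G j k = overlap G F k j := by
  simp only [overlap, min_comm (F _)]
  ring

theorem overlap_nonneg (hF : Monotone F) (hG : Monotone G) (j k : ℕ) :
    0 ≤ overlap F G j k := by
  have hFj := hF (Nat.le_succ j)
  have hGk := hG (Nat.le_succ k)
  unfold overlap
  simp only [min_def]
  split_ifs <;> linarith

theorem overlap_eq_zero (hF : Monotone F) (hG : Monotone G) {j k : ℕ} (h : G (k + 1) ≤ F j) :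
    overlap F G j k = 0 := by
  have hFj : G (k + 1) ≤ F (j + 1) := h.trans (hF (Nat.le_succ j))
  have hGk := hG (Nat.le_succ k)
  simp only [overlap, min_eq_right h, min_eq_right hFj, min_eq_right (hGk.trans h),
    min_eq_right (hGk.trans hFj), sub_self]

theorem hasSum_overlap (hF : Monotone F) (hG : Monotone G) (h0 : G 0 ≤ F 0) {L : ℝ}
    (hGL : Tendsto G atTop (nhds L)) (j : ℕ) (hFL : F (j + 1) ≤ L) :
    HasSum (fun k => overlap F G j k) (F (j + 1) - F j) := by
  rw [hasSum_iff_tendsto_nat_of_nonneg (overlap_nonneg hF hG j)]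
  have hG0 : ∀ i, min (F i) (G 0) = G 0 := fun i => min_eq_right (h0.trans (hF (Nat.zero_le i)))
  have hpartial : ∀ K, ∑ k ∈ range K, overlap F G j k =
      min (F (j + 1)) (G K) - min (F j) (G K) := by
    intro K
    have := sum_range_sub (fun k => min (F (j + 1)) (G k) - min (F j) (G k)) K
    simp only [hG0, sub_self, sub_zero] at this
    rw [← this]
    exact sum_congr rfl fun k _ => by unfold overlap; ring
  simp only [hpartial]
  have hlim := ((tendsto_const_nhds (x := F (j + 1))).min hGL).sub
    ((tendsto_const_nhds (x := F j)).min hGL)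
  rwa [min_eq_left hFL, min_eq_left ((hF (Nat.le_succ j)).trans hFL)] at hlim

end Overlap

def cdf (w : ℕ → ℝ) (n : ℕ) : ℝ := ∑ i ∈ range n, w i

theorem cdf_zero (w : ℕ → ℝ) : cdf w 0 = 0 := sum_range_zero w

theorem cdf_succ_sub (w : ℕ → ℝ) (n : ℕ) : cdf w (n + 1) - cdf w n = w n :=
  sum_range_succ_sub_sum w

theorem IsWeight.monotone_cdf {w : ℕ → ℝ} (h : IsWeight w) : Monotone (cdf w) :=
  monotone_nat_of_le_succ fun n => by linarith [cdf_succ_sub w n, h.1 n]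

theorem IsWeight.tendsto_cdf {w : ℕ → ℝ} (h : IsWeight w) : Tendsto (cdf w) atTop (nhds 1) :=
  h.hasSum.tendsto_sum_nat

theorem IsWeight.cdf_le_one {w : ℕ → ℝ} (h : IsWeight w) (n : ℕ) : cdf w n ≤ 1 :=
  h.monotone_cdf.ge_of_tendsto h.tendsto_cdf n

/-- Lay out `lam` and `μ` as consecutive intervals of `[0, 1)`; `ρ k` is the part of `lam` lying
over the `k`-th block of `μ`, rescaled. -/
theorem IsWeight.exists_mixture {lam μ : ℕ → ℝ} (hlam : IsWeight lam) (hμ : IsWeight μ)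
    (hpos : ∀ k, 0 < μ k) :
    ∃ ρ : ℕ → ℕ → ℝ, (∀ k, IsWeight (ρ k)) ∧ (∀ k, ∃ n, ∀ j, n ≤ j → ρ k j = 0) ∧
      ∀ j, ∑' k, μ k * ρ k j = lam j := by
  have h0 : cdf μ 0 ≤ cdf lam 0 := by rw [cdf_zero, cdf_zero]
  refine ⟨fun k j => overlap (cdf lam) (cdf μ) j k / μ k, fun k => ?_, fun k => ?_, fun j => ?_⟩
  · refine isWeight_of_hasSum
      (fun j => div_nonneg (overlap_nonneg hlam.monotone_cdf hμ.monotone_cdf j k) (hpos k).le) ?_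
    have h := hasSum_overlap hμ.monotone_cdf hlam.monotone_cdf h0.ge hlam.tendsto_cdf k
      (hμ.cdf_le_one _)
    simp only [← overlap_comm, cdf_succ_sub] at h
    simpa only [div_self (hpos k).ne'] using h.div_const (μ k)
  · have hlt : cdf μ (k + 1) < 1 := by
      linarith [hμ.cdf_le_one (k + 2), cdf_succ_sub μ (k + 1), hpos (k + 1)]
    obtain ⟨n, hn⟩ := eventually_atTop.1 (hlam.tendsto_cdf.eventually_const_le hlt)
    exact ⟨n, fun j hj => by
      dsimp only
      rw [overlap_eq_zero hlam.monotone_cdf hμ.monotone_cdf (hn j hj), zero_div]⟩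
  · simp only [mul_div_cancel₀ _ (hpos _).ne']
    rw [← cdf_succ_sub lam j]
    exact (hasSum_overlap hlam.monotone_cdf hμ.monotone_cdf h0 hμ.tendsto_cdf j
      (hlam.cdf_le_one _)).tsum_eq

namespace SuperconvexStr

variable {X : Type} (S : SuperconvexStr X)

theorem pair_eq_comb (t : ℝ) (x y : X) :
    S.pair t x y = S.comb (pairWeight t) (fun i => if i = 0 then x else y) := rfl

theorem pair_one (x y : X) : S.pair 1 x y = x :=
  S.proj _ (isWeight_pairWeight zero_le_one le_rfl) 0 rfl
    (fun i hi => by simp [pairWeight, hi]) _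

theorem comb_single (k : ℕ) (x : ℕ → X) : S.comb (Pi.single k 1) x = x k :=
  S.proj _ (isWeight_single k) k (Pi.single_eq_same k 1) (fun _ hi => Pi.single_eq_of_ne hi 1) x

theorem comb_comp {lam : ℕ → ℝ} (hlam : IsWeight lam) {f : ℕ → ℕ} (hf : Injective f)
    (x : ℕ → X) : S.comb lam (x ∘ f) = S.comb (extend f lam 0) x := by
  have h := S.compos lam hlam (fun j => Pi.single (f j) 1) (fun j => isWeight_single _) x
  simp only [comb_single] at h
  rw [comp_def, h]
  congr 1
  ext k
  by_cases hk : ∃ i, f i = k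
  · obtain ⟨i, rfl⟩ := hk
    rw [hf.extend_apply, tsum_eq_single i fun j hj => by simp [hf.ne hj]]
    simp
  · rw [extend_apply' _ _ _ hk]
    refine (tsum_congr fun j => ?_).trans tsum_zero
    rw [Pi.single_apply, if_neg fun h => hk ⟨j, h.symm⟩, mul_zero]

theorem pair_comb_comb {t : ℝ} (h0 : 0 ≤ t) (h1 : t ≤ 1) {α β : ℕ → ℝ} (hα : IsWeight α)
    (hβ : IsWeight β) (x : ℕ → X) :
    S.pair t (S.comb α x) (S.comb β x) = S.comb (fun j => t * α j + (1 - t) * β j) x := by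
  have h := S.compos (pairWeight t) (isWeight_pairWeight h0 h1)
    (fun i => if i = 0 then α else β) (fun i => by split_ifs <;> assumption) x
  rw [pair_eq_comb, show (fun i => if i = 0 then S.comb α x else S.comb β x) =
    fun i => S.comb (if i = 0 then α else β) x from funext fun i => by split_ifs <;> rfl, h]
  congr 1
  ext j
  rw [tsum_eq_sum fun i hi => by rw [pairWeight_eq_zero t hi, zero_mul]]
  simp [pairWeight]

theorem comb_eq_pair_tail {ν : ℕ → ℝ} (hν : IsWeight ν) (h0 : ν 0 < 1) (x : ℕ → X) :
    S.comb ν x = S.pair (ν 0) (x 0) (S.comb (tailWeight ν) fun j => x (j + 1)) := by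
  have htail : S.comb (tailWeight ν) (fun j => x (j + 1)) =
      S.comb (extend Nat.succ (tailWeight ν) 0) x :=
    S.comb_comp (isWeight_tailWeight hν h0) Nat.succ_injective x
  rw [htail, ← S.comb_single 0 x, S.pair_comb_comb (hν.1 0) h0.le (isWeight_single 0)
    (isWeight_extend (isWeight_tailWeight hν h0) Nat.succ_injective)]
  congr 1
  ext j
  rcases j with _ | j
  · simp
  · rw [show j + 1 = Nat.succ j from rfl, Nat.succ_injective.extend_apply]
    simp only [tailWeight, Pi.single_eq_of_ne (Nat.succ_ne_zero j), mul_zero, zero_add]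
    field_simp [(by linarith : 1 - ν 0 ≠ 0)]

theorem comb_geomWeight (z : ℕ → X) :
    S.comb geomWeight z = S.pair (1 / 2) (z 0) (S.comb geomWeight fun j => z (j + 1)) := by
  have h := S.comb_eq_pair_tail isWeight_geomWeight (by norm_num [geomWeight]) z
  rwa [tailWeight_geomWeight, show geomWeight 0 = 1 / 2 by norm_num [geomWeight]] at h

theorem comb_pair {μ : ℕ → ℝ} (hμ : IsWeight μ) {t : ℝ} (h0 : 0 ≤ t) (h1 : t ≤ 1)
    (u v : ℕ → X) :
    S.comb μ (fun n => S.pair t (u n) (v n)) = S.pair t (S.comb μ u) (S.comb μ v) := by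
  -- Both sides are combinations of the interleaving `w` of `u` and `v`.
  set w : ℕ → X := fun k => if k % 2 = 0 then u (k / 2) else v (k / 2)
  have heven : Injective fun n : ℕ => 2 * n := fun a b h => by simp only at h; omega
  have hodd : Injective fun n : ℕ => 2 * n + 1 := fun a b h => by simp only at h; omega
  have hu : u = w ∘ fun n => 2 * n := by ext n; simp [w]
  have hv : v = w ∘ fun n => 2 * n + 1 := by
    ext n
    simp only [comp_apply, w, if_neg (show (2 * n + 1) % 2 ≠ 0 by omega),
      show (2 * n + 1) / 2 = n by omega]
  have hrow : ∀ n, S.pair t (u n) (v n) =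
      S.comb (fun k => t * (Pi.single (2 * n) 1 : ℕ → ℝ) k +
        (1 - t) * (Pi.single (2 * n + 1) 1 : ℕ → ℝ) k) w := by
    intro n
    rw [← S.pair_comb_comb h0 h1 (isWeight_single _) (isWeight_single _), comb_single,
      comb_single, hu, hv]
    rfl
  rw [funext hrow, S.compos μ hμ _ (fun n => isWeight_mix (isWeight_single _)
    (isWeight_single _) h0 h1) w, hu, hv, S.comb_comp hμ heven, S.comb_comp hμ hodd,
    S.pair_comb_comb h0 h1 (isWeight_extend hμ heven) (isWeight_extend hμ hodd)]
  congr 1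
  ext k
  obtain ⟨i, rfl | rfl⟩ : ∃ i, k = 2 * i ∨ k = 2 * i + 1 := ⟨k / 2, by omega⟩
  · rw [tsum_eq_single i fun n hn => by
      simp [Ne.symm hn, show 2 * i ≠ 2 * n + 1 by omega]]
    rw [heven.extend_apply, extend_apply' _ _ _ (by omega), Pi.single_eq_same,
      Pi.single_eq_of_ne (by omega), Pi.zero_apply]
    ring
  · rw [tsum_eq_single i fun n hn => by
      simp [Ne.symm hn, show 2 * i + 1 ≠ 2 * n by omega]]
    rw [hodd.extend_apply, extend_apply' _ _ _ (by omega), Pi.single_eq_same,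
      Pi.single_eq_of_ne (by omega), Pi.zero_apply]
    ring

theorem pair_half_pair_left {s : ℝ} (h0 : 0 ≤ s) (h1 : s ≤ 1) (x y : X) :
    S.pair (1 / 2) x (S.pair s x y) = S.pair ((1 + s) / 2) x y := by
  have h := S.pair_comb_comb (t := 1 / 2) (by norm_num) (by norm_num) (isWeight_single 0)
    (isWeight_pairWeight h0 h1) fun i => if i = 0 then x else y
  rw [comb_single, if_pos rfl, ← pair_eq_comb] at h
  rw [h, pair_eq_comb]
  congr 1
  ext j
  rcases j with _ | _ | j <;> grind [pairWeight]

theorem pair_half_pair_right {s : ℝ} (h0 : 0 ≤ s) (h1 : s ≤ 1) (x y : X) :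
    S.pair (1 / 2) y (S.pair s x y) = S.pair (s / 2) x y := by
  have h := S.pair_comb_comb (t := 1 / 2) (by norm_num) (by norm_num) (isWeight_single 1)
    (isWeight_pairWeight h0 h1) fun i => if i = 0 then x else y
  rw [comb_single, if_neg one_ne_zero, ← pair_eq_comb] at h
  rw [h, pair_eq_comb]
  congr 1
  ext j
  rcases j with _ | _ | j <;> grind [pairWeight]

/-- One step of the binary expansion of `s`. -/
theorem pair_eq_pair_half_fract {s : ℝ} (h0 : 0 ≤ s) (h1 : s < 1) (x y : X) :
    S.pair s x y =
      S.pair (1 / 2) (if s < 1 / 2 then y else x) (S.pair (Int.fract (2 * s)) x y) := by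
  split_ifs with hs
  · rw [Int.fract_eq_self.2 ⟨by linarith, by linarith⟩, S.pair_half_pair_right (by linarith)
      (by linarith)]
    ring_nf
  · rw [← Int.fract_sub_one, Int.fract_eq_self.2 ⟨by linarith, by linarith⟩,
      S.pair_half_pair_left (by linarith) (by linarith)]
    ring_nf

end SuperconvexStr

section MidpointExtension

variable {X : Type} {m : X → X → X}

theorem eq_comb_geomWeight_of_eq_mid (hcomm : ∀ x y : X, m x y = m y x)
    (hc : Cancellative m) {S : SuperconvexStr X} (hS : ∀ x y : X, S.pair (1 / 2) x y = m x y)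
    {z y : ℕ → X} (hy : ∀ n, y n = m (z n) (y (n + 1))) : y 0 = S.comb geomWeight z := by
  have hunfold : S.comb geomWeight y = m (y 0) (S.comb geomWeight fun n => y (n + 1)) := by
    rw [S.comb_geomWeight, hS]
  have hentropic : S.comb geomWeight y =
      m (S.comb geomWeight z) (S.comb geomWeight fun n => y (n + 1)) := by
    conv_lhs => rw [funext fun n => (hy n).trans (hS _ _).symm]
    rw [S.comb_pair isWeight_geomWeight (by norm_num) (by norm_num), hS]
  apply hc (S.comb geomWeight fun n => y (n + 1))
  rw [hcomm, ← hunfold, hentropic, hcomm]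

theorem comb_geomWeight_eq_of_pair_half_eq (hcomm : ∀ x y : X, m x y = m y x)
    (hc : Cancellative m) {S S' : SuperconvexStr X} (hS : ∀ x y : X, S.pair (1 / 2) x y = m x y)
    (hS' : ∀ x y : X, S'.pair (1 / 2) x y = m x y) (z : ℕ → X) :
    S.comb geomWeight z = S'.comb geomWeight z := by
  refine (eq_comb_geomWeight_of_eq_mid hcomm hc hS
    (y := fun n => S'.comb geomWeight fun i => z (i + n)) fun n => ?_).symm
  rw [S'.comb_geomWeight, hS', zero_add]
  simp only [add_assoc, add_comm 1 n]

theorem pair_eq_of_pair_half_eq (hcomm : ∀ x y : X, m x y = m y x)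
    (hc : Cancellative m) {S S' : SuperconvexStr X} (hS : ∀ x y : X, S.pair (1 / 2) x y = m x y)
    (hS' : ∀ x y : X, S'.pair (1 / 2) x y = m x y) {t : ℝ} (h0 : 0 ≤ t) (h1 : t ≤ 1)
    (x y : X) : S.pair t x y = S'.pair t x y := by
  rcases h1.lt_or_eq with h1 | rfl
  · set τ : ℕ → ℝ := fun n => Int.fract (2 ^ n * t)
    have hτ : ∀ n, Int.fract (2 * τ n) = τ (n + 1) := fun n => by
      show Int.fract (2 * Int.fract (2 ^ n * t)) = Int.fract (2 ^ (n + 1) * t)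
      rw [← Int.self_sub_floor (2 ^ n * t), mul_sub, ← mul_assoc, ← pow_succ',
        show (2 : ℝ) * ⌊2 ^ n * t⌋ = ((2 * ⌊2 ^ n * t⌋ : ℤ) : ℝ) by push_cast; ring,
        Int.fract_sub_intCast]
    have hguarded : ∀ T : SuperconvexStr X, (∀ x y : X, T.pair (1 / 2) x y = m x y) →
        ∀ n, T.pair (τ n) x y = m (if τ n < 1 / 2 then y else x) (T.pair (τ (n + 1)) x y) :=
      fun T hT n => by
        rw [← hT, ← hτ]
        exact T.pair_eq_pair_half_fract (Int.fract_nonneg _) (Int.fract_lt_one _) x y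
    have hτ0 : τ 0 = t := by simp [τ, Int.fract_eq_self.2 ⟨h0, h1⟩]
    have hS0 := eq_comb_geomWeight_of_eq_mid hcomm hc hS (hguarded S hS)
    have hS'0 := eq_comb_geomWeight_of_eq_mid hcomm hc hS (hguarded S' hS')
    rw [hτ0] at hS0 hS'0
    rw [hS0, hS'0]
  · rw [S.pair_one, S'.pair_one]

theorem comb_eq_of_pair_half_eq_of_finite_support (hcomm : ∀ x y : X, m x y = m y x)
    (hc : Cancellative m) {S S' : SuperconvexStr X} (hS : ∀ x y : X, S.pair (1 / 2) x y = m x y)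
    (hS' : ∀ x y : X, S'.pair (1 / 2) x y = m x y) (n : ℕ) {ν : ℕ → ℝ} (hν : IsWeight ν)
    (hsupp : ∀ j, n ≤ j → ν j = 0) (x : ℕ → X) : S.comb ν x = S'.comb ν x := by
  induction n generalizing ν x with
  | zero =>
    have : ν = 0 := funext fun j => hsupp j (Nat.zero_le j)
    simpa [this] using hν.2
  | succ n ih =>
    rcases (hν.le_one 0).lt_or_eq with hlt | heq
    · rw [S.comb_eq_pair_tail hν hlt, S'.comb_eq_pair_tail hν hlt,
        pair_eq_of_pair_half_eq hcomm hc hS hS' (hν.1 0) hlt.le,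
        ih (isWeight_tailWeight hν hlt) fun j hj => by
          simp [tailWeight, hsupp (j + 1) (by omega)]]
    · have hzero := fun i (hi : i ≠ 0) => hν.eq_zero_of_eq_one heq hi
      rw [S.proj ν hν 0 heq hzero, S'.proj ν hν 0 heq hzero]

end MidpointExtension

/-- A cancellative midpoint set admits at most one superconvex structure whose
binary ½-½ combination is the midpoint operation: any two such structures agree
on every superconvex combination. -/
theorem at_most_one_superconvex_extension (X : Type) (m : X → X → X)
    (hm : IsMidpoint m) (hc : Cancellative m)
    (S S' : SuperconvexStr X)
    (hS : ∀ x y : X, S.pair (1 / 2) x y = m x y)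
    (hS' : ∀ x y : X, S'.pair (1 / 2) x y = m x y) :
    ∀ lam, IsWeight lam → ∀ x : ℕ → X, S.comb lam x = S'.comb lam x := by
  intro lam hlam x
  obtain ⟨ρ, hρ, hfin, hmix⟩ := hlam.exists_mixture isWeight_geomWeight geomWeight_pos
  have hcomb : ∀ T : SuperconvexStr X,
      T.comb lam x = T.comb geomWeight fun k => T.comb (ρ k) x := fun T => by
    rw [T.compos _ isWeight_geomWeight ρ hρ x]
    simp only [hmix]
  rw [hcomb S, hcomb S', comb_geomWeight_eq_of_pair_half_eq hm.2.1 hc hS hS']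
  congr 1
  ext k
  obtain ⟨n, hn⟩ := hfin k
  exact comb_eq_of_pair_half_eq_of_finite_support hm.2.1 hc hS hS' n (hρ k) hn x
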